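/- arXiv:1805.04073 — 2 statements merged into one kernel-verified Lean document; each statement's English description precedes it below -/
import Mathlib

section
/- Let F be a field and let f : A → B be a morphism in GrAlg_F (respectively, in GrAlg¹_F), where A = ⊕_{g∈G} A^(g). Then f is a monomorphism if and only if for all homogeneous elements a, b ∈ ⋃_{g∈G} A^(g) with a ≠ b one has f(a) ≠ f(b). In particular, every monomorphism in GrAlg_F or GrAlg¹_F is graded injective. -/
/-!
Homogeneous elements span, so a graded homomorphism is determined by its values on them; hence
injectivity on homogeneous elements makes `f` left cancellable. Conversely, if `f a = f b` for
homogeneous `a` and `b`, evaluate the free (unital) algebra on one generator `x` at `a` and at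
`b`. Grading it by the free group on `x` through word length makes both evaluations graded, as
`xⁿ ↦ aⁿ` is homogeneous of degree `gⁿ` when `a` has degree `g`; composed with `f` they agree, so a
monomorphism forces `a = b`. In the unital case the evaluations are graded because the unit of a
graded unital algebra is homogeneous of degree `1`.
-/

set_option autoImplicit false

universe u

/-- A group grading on a (not necessarily unital) associative algebra over `F`:
an object of the category `GrAlg_F`. -/
structure GrAlg (F : Type u) [Field F] : Type (u + 1) where
  A : Type u
  [ringA : NonUnitalRing A]
  [modA : Module F A]
  [sccA : SMulCommClass F A A]
  [istA : IsScalarTower F A A]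
  G : Type u
  [grpG : Group G]
  comp : G → Submodule F A
  mul_mem : ∀ ⦃g h : G⦄ ⦃a b : A⦄, a ∈ comp g → b ∈ comp h → a * b ∈ comp (g * h)
  independent : iSupIndep comp
  spans : (⨆ g, comp g) = ⊤

attribute [instance] GrAlg.ringA GrAlg.modA GrAlg.sccA GrAlg.istA GrAlg.grpG

variable {F : Type u} [Field F]

/-- The grading is trivial if all components other than the identity component vanish. -/
def GrAlg.IsTrivialGrading (X : GrAlg F) : Prop := ∀ g : X.G, g ≠ 1 → X.comp g = ⊥

/-- The support of a grading. -/
def GrAlg.supp (X : GrAlg F) : Set X.G := {g | X.comp g ≠ ⊥}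

/-- A morphism in `GrAlg_F`: an algebra homomorphism mapping each graded component
into some graded component. -/
@[ext]
structure GrAlgHom (X Y : GrAlg F) where
  hom : X.A →ₙₐ[F] Y.A
  graded : ∀ g : X.G, ∃ h : Y.G, ∀ a ∈ X.comp g, hom a ∈ Y.comp h

def GrAlgHom.id (X : GrAlg F) : GrAlgHom X X where
  hom := NonUnitalAlgHom.id F X.A
  graded g := ⟨g, fun a ha => ha⟩

def GrAlgHom.comp {X Y Z : GrAlg F} (g : GrAlgHom Y Z) (f : GrAlgHom X Y) :
    GrAlgHom X Z where
  hom := g.hom.comp f.hom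
  graded s := by
    obtain ⟨h, hh⟩ := f.graded s
    obtain ⟨k, hk⟩ := g.graded h
    exact ⟨k, fun a ha => by simpa using hk _ (hh a ha)⟩

/-- An object of `GrAlg¹_F`: a group grading on a unital associative algebra. -/
structure GrAlgOne (F : Type u) [Field F] extends GrAlg F : Type (u + 1) where
  one : A
  one_mul : ∀ a : A, one * a = a
  mul_one : ∀ a : A, a * one = a

/-- A morphism in `GrAlg¹_F`: a unital graded algebra homomorphism. -/
@[ext]
structure GrAlgOneHom (X Y : GrAlgOne F) extends GrAlgHom X.toGrAlg Y.toGrAlg where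
  map_one : toGrAlgHom.hom X.one = Y.one

def GrAlgOneHom.id (X : GrAlgOne F) : GrAlgOneHom X X where
  toGrAlgHom := GrAlgHom.id X.toGrAlg
  map_one := rfl

def GrAlgOneHom.comp {X Y Z : GrAlgOne F} (g : GrAlgOneHom Y Z) (f : GrAlgOneHom X Y) :
    GrAlgOneHom X Z where
  toGrAlgHom := g.toGrAlgHom.comp f.toGrAlgHom
  map_one := by
    show (g.toGrAlgHom.hom.comp f.toGrAlgHom.hom) X.one = Z.one
    simp [f.map_one, g.map_one]

/-- A morphism in `tilde{GrAlg_F}`: a graded injective homomorphism. -/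
@[ext]
structure TGrAlgHom (X Y : GrAlg F) extends GrAlgHom X Y where
  injOn : ∀ g : X.G, Set.InjOn toGrAlgHom.hom (X.comp g)

def TGrAlgHom.id (X : GrAlg F) : TGrAlgHom X X where
  toGrAlgHom := GrAlgHom.id X
  injOn g := fun a _ b _ hab => hab

def TGrAlgHom.comp {X Y Z : GrAlg F} (g : TGrAlgHom Y Z) (f : TGrAlgHom X Y) :
    TGrAlgHom X Z where
  toGrAlgHom := g.toGrAlgHom.comp f.toGrAlgHom
  injOn s := by
    intro a ha b hb hab
    obtain ⟨h, hh⟩ := f.graded s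
    exact f.injOn s ha hb (g.injOn h (hh a ha) (hh b hb) (by exact hab))

/-- A morphism in `tilde{GrAlg¹_F}`: a unital graded injective homomorphism. -/
@[ext]
structure TGrAlgOneHom (X Y : GrAlgOne F) extends TGrAlgHom X.toGrAlg Y.toGrAlg where
  map_one : toGrAlgHom.hom X.one = Y.one

def TGrAlgOneHom.id (X : GrAlgOne F) : TGrAlgOneHom X X where
  toTGrAlgHom := TGrAlgHom.id X.toGrAlg
  map_one := rfl

def TGrAlgOneHom.comp {X Y Z : GrAlgOne F} (g : TGrAlgOneHom Y Z) (f : TGrAlgOneHom X Y) :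
    TGrAlgOneHom X Z where
  toTGrAlgHom := g.toTGrAlgHom.comp f.toTGrAlgHom
  map_one := by
    show (g.toGrAlgHom.hom.comp f.toGrAlgHom.hom) X.one = Z.one
    simp [f.map_one, g.map_one]

namespace GrAlg

variable (X : GrAlg F)

def homogeneous : Set X.A := ⋃ g, (X.comp g : Set X.A)

theorem comp_subset_homogeneous (g : X.G) : (X.comp g : Set X.A) ⊆ X.homogeneous :=
  Set.subset_iUnion (fun g => (X.comp g : Set X.A)) g

theorem injOn_homogeneous_iff {B : Type*} (f : X.A → B) :
    Set.InjOn f X.homogeneous ↔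
      ∀ a b : X.A, (∃ g, a ∈ X.comp g) → (∃ g, b ∈ X.comp g) → a ≠ b → f a ≠ f b := by
  simp only [Set.InjOn, homogeneous, Set.mem_iUnion, SetLike.mem_coe, ne_eq, not_imp_not]
  grind

theorem span_homogeneous : Submodule.span F X.homogeneous = ⊤ := by
  rw [homogeneous, ← Submodule.iSup_eq_span, X.spans]

theorem nonUnitalAlgHom_ext {B : Type*} [NonUnitalNonAssocSemiring B] [Module F B]
    {φ ψ : X.A →ₙₐ[F] B} (h : Set.EqOn φ ψ X.homogeneous) : φ = ψ :=
  DFunLike.ext _ _ <| LinearMap.congr_fun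
    (LinearMap.ext_on (f := (φ : X.A →ₗ[F] B)) (g := ψ) X.span_homogeneous h)

end GrAlg

theorem GrAlgHom.mapsTo_homogeneous {X Y : GrAlg F} (f : GrAlgHom X Y) :
    Set.MapsTo f.hom X.homogeneous Y.homogeneous := by
  simp only [Set.MapsTo, GrAlg.homogeneous, Set.mem_iUnion, SetLike.mem_coe]
  rintro a ⟨g, ha⟩
  obtain ⟨h, hh⟩ := f.graded g
  exact ⟨h, hh a ha⟩

theorem GrAlgHom.eq_of_comp_eq {X Y D : GrAlg F} {f : GrAlgHom X Y}
    (hf : Set.InjOn f.hom X.homogeneous) {α β : GrAlgHom D X} (h : f.comp α = f.comp β) :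
    α = β :=
  GrAlgHom.ext <| D.nonUnitalAlgHom_ext fun _ hd =>
    hf (α.mapsTo_homogeneous hd) (β.mapsTo_homogeneous hd)
      (DFunLike.congr_fun (congrArg GrAlgHom.hom h) _)

theorem GrAlgOneHom.eq_of_comp_eq {X Y D : GrAlgOne F} {f : GrAlgOneHom X Y}
    (hf : Set.InjOn f.hom X.homogeneous) {α β : GrAlgOneHom D X} (h : f.comp α = f.comp β) :
    α = β :=
  GrAlgOneHom.ext <| congrArg GrAlgHom.hom <|
    GrAlgHom.eq_of_comp_eq hf (congrArg GrAlgOneHom.toGrAlgHom h)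

theorem GrAlgOne.one_mem_comp_one (X : GrAlgOne F) : X.one ∈ X.comp 1 := by
  -- Write `1 = u + v` with `u` of degree `1` and `v` in degrees `≠ 1`. For `a` of degree `h`,
  -- `a - u * a = v * a` lies in degree `h` and in degrees `≠ h`, so `u` is a left unit.
  obtain ⟨u, hu, v, hv, huv⟩ : ∃ u ∈ X.comp 1, ∃ v ∈ ⨆ (g) (_ : g ≠ 1), X.comp g, u + v = X.one :=
    Submodule.mem_sup.mp <| by rw [← iSup_split_single, X.spans]; exact Submodule.mem_top
  have hua : ∀ h, ∀ a ∈ X.comp h, u * a = a := by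
    intro h a ha
    have hva : v * a ∈ ⨆ (k) (_ : k ≠ h), X.comp k := by
      have : (⨆ (g) (_ : g ≠ 1), X.comp g).map (LinearMap.mulRight F a) ≤
          ⨆ (k) (_ : k ≠ h), X.comp k := by
        simp only [Submodule.map_iSup]
        refine iSup₂_le fun g hg => Submodule.map_le_iff_le_comap.mpr fun b hb => ?_
        exact Submodule.mem_iSup_of_mem (g * h) <| Submodule.mem_iSup_of_mem
          (by simpa using hg) (X.mul_mem hb ha)
      exact this ⟨v, hv, rfl⟩
    have hsub : a - u * a = v * a := by
      rw [sub_eq_iff_eq_add', ← add_mul, huv, X.one_mul]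
    have hmem : a - u * a ∈ X.comp h :=
      Submodule.sub_mem _ ha (by simpa using X.mul_mem hu ha)
    exact (sub_eq_zero.mp ((Submodule.disjoint_def.mp (X.independent h)) _ hmem
      (hsub ▸ hva))).symm
  have hmul : LinearMap.mulLeft F u = LinearMap.id :=
    LinearMap.ext_on X.span_homogeneous (by
      simp only [Set.EqOn, GrAlg.homogeneous, Set.mem_iUnion, SetLike.mem_coe]
      rintro a ⟨h, ha⟩
      exact hua h a ha)
  have : X.one = u := (LinearMap.congr_fun hmul X.one).symm.trans (X.mul_one u)
  exact this ▸ hu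

namespace MonoidAlgebra

variable {R M H : Type*} [CommSemiring R]

theorem mul_mem_supported_preimage_singleton [Mul M] [Mul H] (deg : M →ₙ* H) {g h : H}
    {x y : MonoidAlgebra R M} (hx : x ∈ supported R R (deg ⁻¹' {g}))
    (hy : y ∈ supported R R (deg ⁻¹' {h})) : x * y ∈ supported R R (deg ⁻¹' {g * h}) := by
  classical
  intro m hm
  obtain ⟨a, ha, b, hb, rfl⟩ := Finset.mem_mul.mp (support_coeff_mul_subset x y hm)
  have hga : deg a = g := hx ha
  have hhb : deg b = h := hy hb
  simp [hga, hhb]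

theorem iSupIndep_supported_preimage_singleton (deg : M → H) :
    iSupIndep fun h => supported R R (deg ⁻¹' {h}) := by
  have hfin : iSupIndep fun h => Finsupp.supported R R (deg ⁻¹' {h}) := by
    intro h
    refine (Finsupp.disjoint_supported_supported
      (disjoint_compl_right.preimage deg)).mono_right (iSup₂_le fun j hj => ?_)
    exact Finsupp.supported_mono (Set.preimage_mono (by simpa using hj.symm))
  simpa only [supported_eq_map] using
    LinearMap.iSupIndep_map _ (coeffLinearEquiv R).symm.injective hfin

theorem iSup_supported_preimage_singleton (deg : M → H) :
    ⨆ h, supported R R (deg ⁻¹' {h}) = ⊤ := by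
  have hcover : ⋃ h, deg ⁻¹' {h} = Set.univ := Set.iUnion_eq_univ_iff.mpr fun m => ⟨deg m, rfl⟩
  simp only [supported_eq_map, ← Submodule.map_iSup, ← Finsupp.supported_iUnion, hcover,
    Finsupp.supported_univ, Submodule.map_top, LinearEquiv.range]

theorem liftMagma_single {A : Type*} [Mul M] [NonUnitalNonAssocSemiring A] [Module R A]
    [IsScalarTower R A A] [SMulCommClass R A A] (f : M →ₙ* A) (m : M) (r : R) :
    liftMagma R f (single m r) = r • f m := by
  simp [liftMagma_apply_apply]

end MonoidAlgebra

variable (F) in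
noncomputable def GrAlg.monoidAlgebra {M H : Type u} [Semigroup M] [Group H] (deg : M →ₙ* H) :
    GrAlg F where
  A := MonoidAlgebra F M
  G := H
  comp h := MonoidAlgebra.supported F F (deg ⁻¹' {h})
  mul_mem _ _ _ _ := MonoidAlgebra.mul_mem_supported_preimage_singleton deg
  independent := MonoidAlgebra.iSupIndep_supported_preimage_singleton deg
  spans := MonoidAlgebra.iSup_supported_preimage_singleton deg

variable (F) in
noncomputable def GrAlgOne.monoidAlgebra {M H : Type u} [Monoid M] [Group H] (deg : M →* H) :
    GrAlgOne F where
  toGrAlg := GrAlg.monoidAlgebra F (deg : M →ₙ* H)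
  one := (1 : MonoidAlgebra F M)
  one_mul := _root_.one_mul (M := MonoidAlgebra F M)
  mul_one := _root_.mul_one (M := MonoidAlgebra F M)

noncomputable def GrAlg.liftMagma {M H : Type u} [Semigroup M] [Group H] {deg : M →ₙ* H}
    {X : GrAlg F} (φ : M →ₙ* X.A) (τ : H → X.G) (hφ : ∀ m, φ m ∈ X.comp (τ (deg m))) :
    GrAlgHom (GrAlg.monoidAlgebra F deg) X where
  hom := MonoidAlgebra.liftMagma F φ
  graded h := ⟨τ h, by
    show MonoidAlgebra.supported F F (deg ⁻¹' {h}) ≤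
      (X.comp (τ h)).comap (MonoidAlgebra.liftMagma F φ : MonoidAlgebra F M →ₗ[F] X.A)
    rw [MonoidAlgebra.supported_eq_span_single, Submodule.span_le]
    rintro _ ⟨m, rfl, rfl⟩
    simpa using hφ m⟩

theorem GrAlgHom.comp_liftMagma_eq {M H : Type u} [Semigroup M] [Group H] {deg : M →ₙ* H}
    {X Y : GrAlg F} (f : GrAlgHom X Y) {φ ψ : M →ₙ* X.A} {τ σ : H → X.G}
    (hφ : ∀ m, φ m ∈ X.comp (τ (deg m))) (hψ : ∀ m, ψ m ∈ X.comp (σ (deg m)))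
    (h : ∀ m, f.hom (φ m) = f.hom (ψ m)) :
    f.comp (GrAlg.liftMagma φ τ hφ) = f.comp (GrAlg.liftMagma ψ σ hψ) :=
  GrAlgHom.ext <| MonoidAlgebra.nonUnitalAlgHom_ext F fun m => by
    show f.hom (MonoidAlgebra.liftMagma F φ (MonoidAlgebra.single m 1)) =
      f.hom (MonoidAlgebra.liftMagma F ψ (MonoidAlgebra.single m 1))
    rw [MonoidAlgebra.liftMagma_single, MonoidAlgebra.liftMagma_single, one_smul, one_smul, h]

theorem FreeSemigroup.lift_mem_comp {α : Type*} {X : GrAlg F} {x : α → X.A} {d : α → X.G}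
    (hx : ∀ i, x i ∈ X.comp (d i)) (w : FreeSemigroup α) :
    lift x w ∈ X.comp (FreeGroup.lift d (lift FreeGroup.of w)) :=
  FreeSemigroup.recOnMul w (by simpa using hx) fun i w _ hw => by
    simpa using X.mul_mem (hx i) hw

theorem FreeSemigroup.map_lift_eq_map_lift {α β γ : Type*} [Semigroup β] [Mul γ]
    (f : β →ₙ* γ) {x y : α → β} (h : ∀ i, f (x i) = f (y i)) (w : FreeSemigroup α) :
    f (lift x w) = f (lift y w) :=
  DFunLike.congr_fun (hom_ext (f := f.comp (lift x)) (g := f.comp (lift y)) (funext h)) w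

variable (F) in
noncomputable def GrAlg.free (α : Type u) : GrAlg F :=
  GrAlg.monoidAlgebra F (FreeSemigroup.lift (FreeGroup.of : α → FreeGroup α))

noncomputable def GrAlg.freeLift {α : Type u} {X : GrAlg F} (x : α → X.A) (d : α → X.G)
    (hx : ∀ i, x i ∈ X.comp (d i)) : GrAlgHom (GrAlg.free F α) X :=
  GrAlg.liftMagma (FreeSemigroup.lift x) (FreeGroup.lift d) (FreeSemigroup.lift_mem_comp hx)

theorem GrAlg.freeLift_single_of {α : Type u} {X : GrAlg F} {x : α → X.A} {d : α → X.G}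
    (hx : ∀ i, x i ∈ X.comp (d i)) (i : α) :
    (GrAlg.freeLift x d hx).hom (MonoidAlgebra.single (FreeSemigroup.of i) 1) = x i :=
  (MonoidAlgebra.liftMagma_single _ _ _).trans (one_smul F (x i))

theorem GrAlgHom.comp_freeLift_eq {α : Type u} {X Y : GrAlg F} (f : GrAlgHom X Y)
    {x y : α → X.A} {d e : α → X.G} (hx : ∀ i, x i ∈ X.comp (d i))
    (hy : ∀ i, y i ∈ X.comp (e i)) (h : ∀ i, f.hom (x i) = f.hom (y i)) :
    f.comp (GrAlg.freeLift x d hx) = f.comp (GrAlg.freeLift y e hy) :=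
  f.comp_liftMagma_eq _ _ (FreeSemigroup.map_lift_eq_map_lift (f.hom : X.A →ₙ* Y.A) h)

def GrAlgOne.withOneLift (X : GrAlgOne F) {M : Type*} [Mul M] (φ : M →ₙ* X.A) :
    WithOne M →ₙ* X.A where
  toFun m := WithOne.recOneCoe X.one φ m
  map_mul' m n := by
    induction m using WithOne.recOneCoe <;> induction n using WithOne.recOneCoe <;>
      simp [X.one_mul, X.mul_one, ← WithOne.coe_mul]

variable (F) in
noncomputable def GrAlgOne.free (α : Type u) : GrAlgOne F :=
  GrAlgOne.monoidAlgebra F (WithOne.lift (FreeSemigroup.lift (FreeGroup.of : α → FreeGroup α)))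

theorem GrAlgOne.withOneLift_mem_comp {α : Type*} {X : GrAlgOne F} {x : α → X.A} {d : α → X.G}
    (hx : ∀ i, x i ∈ X.comp (d i)) (m : WithOne (FreeSemigroup α)) :
    X.withOneLift (FreeSemigroup.lift x) m ∈
      X.comp (FreeGroup.lift d (WithOne.lift (FreeSemigroup.lift FreeGroup.of) m)) := by
  induction m using WithOne.recOneCoe with
  | one => simpa [GrAlgOne.withOneLift] using X.one_mem_comp_one
  | coe w => simpa [GrAlgOne.withOneLift] using FreeSemigroup.lift_mem_comp hx w

noncomputable def GrAlgOne.freeLift {α : Type u} {X : GrAlgOne F} (x : α → X.A) (d : α → X.G)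
    (hx : ∀ i, x i ∈ X.comp (d i)) : GrAlgOneHom (GrAlgOne.free F α) X where
  toGrAlgHom := GrAlg.liftMagma (X.withOneLift (FreeSemigroup.lift x)) (FreeGroup.lift d)
    (GrAlgOne.withOneLift_mem_comp hx)
  map_one := (MonoidAlgebra.liftMagma_single _ _ _).trans (one_smul F X.one)

theorem GrAlgOne.freeLift_single_of {α : Type u} {X : GrAlgOne F} {x : α → X.A} {d : α → X.G}
    (hx : ∀ i, x i ∈ X.comp (d i)) (i : α) :
    (GrAlgOne.freeLift x d hx).hom (MonoidAlgebra.single ↑(FreeSemigroup.of i) 1) = x i :=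
  (MonoidAlgebra.liftMagma_single _ _ _).trans (one_smul F (x i))

theorem GrAlgOneHom.comp_freeLift_eq {α : Type u} {X Y : GrAlgOne F} (f : GrAlgOneHom X Y)
    {x y : α → X.A} {d e : α → X.G} (hx : ∀ i, x i ∈ X.comp (d i))
    (hy : ∀ i, y i ∈ X.comp (e i)) (h : ∀ i, f.hom (x i) = f.hom (y i)) :
    f.comp (GrAlgOne.freeLift x d hx) = f.comp (GrAlgOne.freeLift y e hy) := by
  refine GrAlgOneHom.ext <| congrArg GrAlgHom.hom <| f.toGrAlgHom.comp_liftMagma_eq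
    (GrAlgOne.withOneLift_mem_comp hx) (GrAlgOne.withOneLift_mem_comp hy) fun m => ?_
  induction m using WithOne.recOneCoe with
  | one => rfl
  | coe w => exact FreeSemigroup.map_lift_eq_map_lift (f.hom : X.A →ₙ* Y.A) h w

section Statement

variable (F)

/-- `f` is a monomorphism in `GrAlg_F`. -/
def IsMonoGrAlg {X Y : GrAlg F} (f : GrAlgHom X Y) : Prop :=
  ∀ (D : GrAlg F) (α β : GrAlgHom D X), f.comp α = f.comp β → α = β

/-- `f` is a monomorphism in `GrAlg¹_F`. -/
def IsMonoGrAlgOne {X Y : GrAlgOne F} (f : GrAlgOneHom X Y) : Prop :=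
  ∀ (D : GrAlgOne F) (α β : GrAlgOneHom D X), f.comp α = f.comp β → α = β

theorem isMonoGrAlg_iff_injOn_homogeneous {X Y : GrAlg F} (f : GrAlgHom X Y) :
    IsMonoGrAlg F f ↔ Set.InjOn f.hom X.homogeneous := by
  refine ⟨fun hf a ha b hb hab => ?_, fun hf _ _ _ => GrAlgHom.eq_of_comp_eq hf⟩
  obtain ⟨g, ha⟩ := Set.mem_iUnion.mp ha
  obtain ⟨h, hb⟩ := Set.mem_iUnion.mp hb
  have := hf _ _ _ (f.comp_freeLift_eq (α := PUnit) (fun _ => ha) (fun _ => hb) fun _ => hab)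
  simpa [GrAlg.freeLift_single_of] using
    congrArg (fun φ => φ.hom (MonoidAlgebra.single (FreeSemigroup.of PUnit.unit) 1)) this

theorem isMonoGrAlgOne_iff_injOn_homogeneous {X Y : GrAlgOne F} (f : GrAlgOneHom X Y) :
    IsMonoGrAlgOne F f ↔ Set.InjOn f.hom X.homogeneous := by
  refine ⟨fun hf a ha b hb hab => ?_, fun hf _ _ _ => GrAlgOneHom.eq_of_comp_eq hf⟩
  obtain ⟨g, ha⟩ := Set.mem_iUnion.mp ha
  obtain ⟨h, hb⟩ := Set.mem_iUnion.mp hb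
  have := hf _ _ _ (f.comp_freeLift_eq (α := PUnit) (fun _ => ha) (fun _ => hb) fun _ => hab)
  simpa [GrAlgOne.freeLift_single_of] using
    congrArg (fun φ => φ.hom (MonoidAlgebra.single ↑(FreeSemigroup.of PUnit.unit) 1)) this

/-- A morphism `f : A → B` in `GrAlg_F` (resp. `GrAlg¹_F`) is a monomorphism if and only
if it is injective on the set of homogeneous elements; in particular, every monomorphism
is graded injective. -/
theorem mono_iff_injective_on_homogeneous (F : Type u) [Field F] :
    (∀ (X Y : GrAlg F) (f : GrAlgHom X Y),
      (IsMonoGrAlg F f ↔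
        ∀ a b : X.A, (∃ g, a ∈ X.comp g) → (∃ g, b ∈ X.comp g) → a ≠ b →
          f.hom a ≠ f.hom b)
      ∧ (IsMonoGrAlg F f → ∀ g : X.G, Set.InjOn f.hom (X.comp g)))
    ∧
    (∀ (X Y : GrAlgOne F) (f : GrAlgOneHom X Y),
      (IsMonoGrAlgOne F f ↔
        ∀ a b : X.A, (∃ g, a ∈ X.comp g) → (∃ g, b ∈ X.comp g) → a ≠ b →
          f.hom a ≠ f.hom b)
      ∧ (IsMonoGrAlgOne F f → ∀ g : X.G, Set.InjOn f.hom (X.comp g))) := by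
  refine ⟨fun X Y f => ?_, fun X Y f => ?_⟩
  · rw [← X.injOn_homogeneous_iff, isMonoGrAlg_iff_injOn_homogeneous]
    exact ⟨Iff.rfl, fun hf g => hf.mono (X.comp_subset_homogeneous g)⟩
  · rw [← X.injOn_homogeneous_iff, isMonoGrAlgOne_iff_injOn_homogeneous]
    exact ⟨Iff.rfl, fun hf g => hf.mono (X.comp_subset_homogeneous g)⟩

end Statement
end

section
/- Let G and H be groups and let F be a field. Then the coproduct of the group algebras FG and FH (each with its standard grading) in the category tilde{GrAlg_F} does not exist. -/
set_option autoImplicit false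

universe u

variable {F : Type u} [Field F]

/-! The group algebra `FG` with its standard grading, as an object of our categories. -/

lemma stdComp_eq {F : Type u} [Field F] {G : Type u} [Group G] (g : G) :
    Submodule.span F {MonoidAlgebra.single g 1} =
      LinearMap.range (MonoidAlgebra.lsingle g : F →ₗ[F] MonoidAlgebra F G) := by
  apply le_antisymm
  · rw [Submodule.span_le]
    intro x hx
    rw [Set.mem_singleton_iff] at hx
    subst hx
    exact ⟨1, by simp [MonoidAlgebra.lsingle_apply]⟩
  · rintro x ⟨c, rfl⟩
    rw [Submodule.mem_span_singleton]
    exact ⟨c, by simp [MonoidAlgebra.lsingle_apply]⟩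

/-- The group algebra `FG` with its standard grading `FG = ⊕_{g ∈ G} F·u_g`. -/
noncomputable def grpAlg (F : Type u) [Field F] (G : Type u) [Group G] : GrAlg F where
  A := MonoidAlgebra F G
  G := G
  comp g := Submodule.span F {MonoidAlgebra.single g 1}
  mul_mem := by
    intro g h a b ha hb
    rw [Submodule.mem_span_singleton] at ha hb ⊢
    obtain ⟨c, rfl⟩ := ha
    obtain ⟨d, rfl⟩ := hb
    refine ⟨c * d, ?_⟩
    rw [smul_mul_assoc, mul_smul_comm, MonoidAlgebra.single_mul_single, one_mul, smul_smul]
  independent := by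
    have hF : iSupIndep (fun g : G => LinearMap.range (Finsupp.lsingle g : F →ₗ[F] (G →₀ F))) := by
     intro g
     have key := Finsupp.disjoint_lsingle_lsingle ({g} : Set G) ({g}ᶜ : Set G)
       disjoint_compl_right (M := F) (R := F)
     have h1 : (⨆ a ∈ ({g} : Set G), LinearMap.range (Finsupp.lsingle a : F →ₗ[F] (G →₀ F)))
         = LinearMap.range (Finsupp.lsingle g : F →ₗ[F] (G →₀ F)) := by simp
     have h2 : (⨆ a ∈ ({g}ᶜ : Set G), LinearMap.range (Finsupp.lsingle a : F →ₗ[F] (G →₀ F)))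
         = ⨆ h, ⨆ _ : h ≠ g, LinearMap.range (Finsupp.lsingle h : F →ₗ[F] (G →₀ F)) := by
       simp [Set.mem_compl_iff]
     rw [h1, h2] at key
     exact key
    have hc : ∀ g : G, Submodule.span F {MonoidAlgebra.single g (1 : F)} =
        Submodule.map (MonoidAlgebra.coeffLinearEquiv F : MonoidAlgebra F G ≃ₗ[F] (G →₀ F)).symm.toLinearMap
          (LinearMap.range (Finsupp.lsingle g : F →ₗ[F] (G →₀ F))) := by
      intro g
      rw [stdComp_eq, MonoidAlgebra.lsingle, LinearMap.range_comp]
    simp only [hc]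
    exact hF.map_orderIso (Submodule.orderIsoMapComap
      (MonoidAlgebra.coeffLinearEquiv F : MonoidAlgebra F G ≃ₗ[F] (G →₀ F)).symm)
  spans := by
    simp only [stdComp_eq, MonoidAlgebra.lsingle, LinearMap.range_comp]
    rw [← Submodule.map_iSup, Finsupp.iSup_lsingle_range, Submodule.map_top]
    exact LinearMap.range_eq_top.mpr (LinearEquiv.surjective _)

/-- The group algebra `FG` with its standard grading, as an object of `GrAlg¹_F`. -/
noncomputable def grpAlgOne (F : Type u) [Field F] (G : Type u) [Group G] : GrAlgOne F :=
  GrAlgOne.mk (grpAlg F G) (1 : MonoidAlgebra F G)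
    (fun (a : MonoidAlgebra F G) => one_mul a) (fun (a : MonoidAlgebra F G) => mul_one a)

/-!
The images of `u_1` under the two coprojections `i`, `j` into a putative coproduct `C` are nonzero
homogeneous idempotents, hence lie in the identity component `C_1`. Test the universal property
against `F × F`, trivially graded. Sending both `FG` and `FH` to the first factor by the
augmentation, graded injectivity of the mediating map on `C_1` forces `i u_1 = j u_1`. Sending
them to different factors, this equality is mapped to `(1, 0) = (0, 1)`.
-/

lemma GrAlg.eq_one_of_mem_comp_of_mul_self {C : GrAlg F} {a : C.G} {e : C.A} (he : e ∈ C.comp a)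
    (hidem : e * e = e) (hne : e ≠ 0) : a = 1 := by
  by_contra ha
  have haa : a * a ≠ a := fun h => ha (mul_eq_left.mp h)
  have he' : e ∈ C.comp (a * a) := hidem ▸ C.mul_mem he he
  exact hne (Submodule.disjoint_def.mp (C.independent.pairwiseDisjoint haa) e he' he)

lemma TGrAlgHom.map_ne_zero {X Y : GrAlg F} (f : TGrAlgHom X Y) {g : X.G} {x : X.A}
    (hx : x ∈ X.comp g) (hne : x ≠ 0) : f.hom x ≠ 0 := fun h =>
  hne (f.injOn g hx (zero_mem _) (h.trans (map_zero f.hom).symm))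

lemma TGrAlgHom.hom_apply_of_comp_eq {X Y Z : GrAlg F} {ψ : TGrAlgHom Y Z} {f : TGrAlgHom X Y}
    {g : TGrAlgHom X Z} (h : ψ.comp f = g) (x : X.A) : ψ.hom (f.hom x) = g.hom x := by
  rw [← h]
  rfl

namespace grpAlg

variable {G : Type u} [Group G]

/-- `u_g`, typed in the carrier `(grpAlg F G).A` rather than in `MonoidAlgebra F G`, so that it
matches syntactically the arguments of graded maps out of `grpAlg F G`. -/
noncomputable def u (g : G) : (grpAlg F G).A := MonoidAlgebra.single g (1 : F)

lemma u_mem_comp (g : G) : u (F := F) g ∈ (grpAlg F G).comp g :=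
  Submodule.mem_span_singleton_self (R := F) (M := MonoidAlgebra F G) _

lemma u_mul_u (g h : G) : u (F := F) g * u h = u (g * h) := by
  have h' : (MonoidAlgebra.single g 1 * MonoidAlgebra.single h 1 : MonoidAlgebra F G) =
      MonoidAlgebra.single (g * h) 1 := by
    rw [MonoidAlgebra.single_mul_single, one_mul]
  exact h'

lemma u_ne_zero (g : G) : u (F := F) g ≠ 0 :=
  MonoidAlgebra.single_ne_zero.mpr one_ne_zero

lemma mem_comp_iff {g : G} {x : (grpAlg F G).A} :
    x ∈ (grpAlg F G).comp g ↔ ∃ c : F, c • u g = x :=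
  Submodule.mem_span_singleton (R := F) (M := MonoidAlgebra F G)

end grpAlg

open grpAlg

/-- A graded injective map keeps `u_1` a nonzero idempotent, and those live in the identity
component. -/
lemma TGrAlgHom.map_u_one_mem_comp_one {G : Type u} [Group G] {C : GrAlg F}
    (f : TGrAlgHom (grpAlg F G) C) : f.hom (u 1) ∈ C.comp 1 := by
  obtain ⟨a, ha⟩ := f.graded 1
  have hidem : u (F := F) (1 : G) * u 1 = u 1 := by rw [u_mul_u, mul_one]
  have ha1 : a = 1 := GrAlg.eq_one_of_mem_comp_of_mul_self (ha _ (u_mem_comp (1 : G)))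
    (by rw [← map_mul, hidem]) (f.map_ne_zero (u_mem_comp (1 : G)) (u_ne_zero 1))
  exact ha1 ▸ ha _ (u_mem_comp (1 : G))

def GrAlg.trivial (F : Type u) [Field F] (A : Type u) [NonUnitalRing A] [Module F A]
    [SMulCommClass F A A] [IsScalarTower F A A] : GrAlg F where
  A := A
  G := PUnit
  comp _ := ⊤
  mul_mem _ _ _ _ _ _ := Submodule.mem_top
  independent := iSupIndep_subsingleton _
  spans := iSup_const

/-- Each component of `FG` is a line, on which `φ` is injective as soon as `φ u_g ≠ 0`. -/
def TGrAlgHom.toTrivial {G : Type u} [Group G] {A : Type u} [NonUnitalRing A] [Module F A]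
    [SMulCommClass F A A] [IsScalarTower F A A] (φ : (grpAlg F G).A →ₙₐ[F] A)
    (hφ : ∀ g, φ (u g) ≠ 0) : TGrAlgHom (grpAlg F G) (GrAlg.trivial F A) where
  hom := φ
  graded _ := ⟨PUnit.unit, fun _ _ => Submodule.mem_top (R := F) (M := A)⟩
  injOn (g : G) x hx y hy hxy := by
    obtain ⟨c, rfl⟩ := mem_comp_iff.mp hx
    obtain ⟨d, rfl⟩ := mem_comp_iff.mp hy
    change φ (c • u g) = φ (d • u g) at hxy
    rw [map_smul, map_smul] at hxy
    rw [smul_left_injective F (hφ g) hxy]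

noncomputable def augmentation (G : Type u) [Group G] : (grpAlg F G).A →ₙₐ[F] F :=
  (MonoidAlgebra.lift F F G 1).toNonUnitalAlgHom

lemma augmentation_u {G : Type u} [Group G] (g : G) : augmentation (F := F) G (u g) = 1 := by
  show MonoidAlgebra.lift F F G 1 (MonoidAlgebra.single g 1) = 1
  simp

noncomputable def augmentationInl (G : Type u) [Group G] :
    TGrAlgHom (grpAlg F G) (GrAlg.trivial F (F × F)) :=
  TGrAlgHom.toTrivial ((NonUnitalAlgHom.inl F F F).comp (augmentation G))
    (fun g => by simp [NonUnitalAlgHom.comp_apply, augmentation_u])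

noncomputable def augmentationInr (G : Type u) [Group G] :
    TGrAlgHom (grpAlg F G) (GrAlg.trivial F (F × F)) :=
  TGrAlgHom.toTrivial ((NonUnitalAlgHom.inr F F F).comp (augmentation G))
    (fun g => by simp [NonUnitalAlgHom.comp_apply, augmentation_u])

lemma augmentationInl_u {G : Type u} [Group G] (g : G) :
    (augmentationInl (F := F) G).hom (u g) = ((1 : F), (0 : F)) := by
  show NonUnitalAlgHom.inl F F F (augmentation G (u g)) = ((1 : F), (0 : F))
  rw [augmentation_u, NonUnitalAlgHom.inl_apply]

lemma augmentationInr_u {G : Type u} [Group G] (g : G) :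
    (augmentationInr (F := F) G).hom (u g) = ((0 : F), (1 : F)) := by
  show NonUnitalAlgHom.inr F F F (augmentation G (u g)) = ((0 : F), (1 : F))
  rw [augmentation_u, NonUnitalAlgHom.inr_apply]

section Statement

/-- The coproduct of the group algebras `FG` and `FH` (with their standard gradings) in
the category `tilde{GrAlg_F}` does not exist. -/
theorem no_coproduct_of_group_algebras (F : Type u) [Field F]
    (G H : Type u) [Group G] [Group H] :
    ¬ ∃ (C : GrAlg F) (i : TGrAlgHom (grpAlg F G) C) (j : TGrAlgHom (grpAlg F H) C),
        ∀ (D : GrAlg F) (α : TGrAlgHom (grpAlg F G) D) (β : TGrAlgHom (grpAlg F H) D),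
          ∃! ψ : TGrAlgHom C D, ψ.comp i = α ∧ ψ.comp j = β := by
  rintro ⟨C, i, j, huniv⟩
  obtain ⟨ψ₁, ⟨hψ₁i, hψ₁j⟩, -⟩ := huniv _ (augmentationInl G) (augmentationInl H)
  have hij : i.hom (u 1) = j.hom (u 1) :=
    ψ₁.injOn 1 i.map_u_one_mem_comp_one j.map_u_one_mem_comp_one <| by
      rw [TGrAlgHom.hom_apply_of_comp_eq hψ₁i, TGrAlgHom.hom_apply_of_comp_eq hψ₁j,
        augmentationInl_u, augmentationInl_u]
  obtain ⟨ψ₂, ⟨hψ₂i, hψ₂j⟩, -⟩ := huniv _ (augmentationInl G) (augmentationInr H)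
  have h := congrArg ψ₂.hom hij
  rw [TGrAlgHom.hom_apply_of_comp_eq hψ₂i, TGrAlgHom.hom_apply_of_comp_eq hψ₂j,
    augmentationInl_u, augmentationInr_u] at h
  exact one_ne_zero (congrArg Prod.fst h)

end Statement
end
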